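/- arXiv:1705.09450 — 5 statements merged into one kernel-verified Lean document; each statement's English description precedes it below -/
import Mathlib

section
/- Let A be a C*-algebra with unit e and let M be a full Hilbert A-module. Then there exist finitely many elements x_1, ..., x_n in M such that the sum of ⟨x_i, x_i⟩ for i = 1 to n equals e. -/
/-!
Polarization puts every inner product `⟨x, y⟩` in the complex span of the inner squares
`⟨x, x⟩`, so fullness yields `a = ∑ cᵢ • ⟨xᵢ, xᵢ⟩` with `‖1 - a‖ < 1`. The real part of `a` is
then strictly positive, and it is dominated by `p = ∑ (Re cᵢ)⁺ • ⟨xᵢ, xᵢ⟩`, which is again a sum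
of inner squares. So `p` is strictly positive, and rescaling the vectors by `p ^ (-1/2)` turns
`p` into `p ^ (-1/2) * p * p ^ (-1/2) = 1`.
-/

open Complex ComplexStarModule Submodule

section Inner

variable {A M : Type*} [Ring A] [StarRing A] [AddCommGroup M] {inn : M → M → A}

lemma inn_add_right (inn_add_left : ∀ x y z : M, inn (x + y) z = inn x z + inn y z)
    (inn_star : ∀ x y : M, inn x y = star (inn y x)) (x y z : M) :
    inn x (y + z) = inn x y + inn x z := by
  rw [inn_star, inn_add_left, star_add, ← inn_star, ← inn_star]

variable [Module A M]

lemma inn_smul_right (inn_smul_left : ∀ (a : A) (x y : M), inn (a • x) y = a * inn x y)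
    (inn_star : ∀ x y : M, inn x y = star (inn y x)) (a : A) (x y : M) :
    inn x (a • y) = inn x y * star a := by
  rw [inn_star, inn_smul_left, star_mul, ← inn_star]

lemma sum_inn_smul_self (inn_smul_left : ∀ (a : A) (x y : M), inn (a • x) y = a * inn x y)
    (inn_star : ∀ x y : M, inn x y = star (inn y x)) {ι : Type*} (s : Finset ι) (c : A)
    (w : ι → M) :
    ∑ i ∈ s, inn (c • w i) (c • w i) = c * (∑ i ∈ s, inn (w i) (w i)) * star c := by
  simp only [inn_smul_left, inn_smul_right inn_smul_left inn_star, Finset.mul_sum,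
    Finset.sum_mul, mul_assoc]

end Inner

section ComplexInner

variable {A M : Type*} [Ring A] [Algebra ℂ A] [AddCommGroup M] [Module ℂ M] [Module A M]
  [IsScalarTower ℂ A M] {inn : M → M → A}

lemma inn_complex_smul_left (inn_smul_left : ∀ (a : A) (x y : M), inn (a • x) y = a * inn x y)
    (c : ℂ) (x y : M) : inn (c • x) y = c • inn x y := by
  rw [← smul_one_smul A c x, inn_smul_left, smul_one_mul]

variable [StarRing A] [StarModule ℂ A]

lemma inn_complex_smul_right (inn_smul_left : ∀ (a : A) (x y : M), inn (a • x) y = a * inn x y)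
    (inn_star : ∀ x y : M, inn x y = star (inn y x)) (c : ℂ) (x y : M) :
    inn x (c • y) = star c • inn x y := by
  rw [inn_star, inn_complex_smul_left inn_smul_left, star_smul, ← inn_star]

lemma inn_eq_polarization (inn_add_left : ∀ x y z : M, inn (x + y) z = inn x z + inn y z)
    (inn_smul_left : ∀ (a : A) (x y : M), inn (a • x) y = a * inn x y)
    (inn_star : ∀ x y : M, inn x y = star (inn y x)) (x y : M) :
    inn x y =
      (4 : ℂ)⁻¹ • ∑ k : Fin 4, I ^ (k : ℕ) • inn (x + I ^ (k : ℕ) • y) (x + I ^ (k : ℕ) • y) := by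
  simp only [inn_add_left, inn_add_right inn_add_left inn_star,
    inn_complex_smul_left inn_smul_left, inn_complex_smul_right inn_smul_left inn_star,
    Fin.sum_univ_four, star_pow, star_def, conj_I]
  match_scalars <;> simp [pow_succ]
  norm_num

lemma inn_mem_span_inn_self (inn_add_left : ∀ x y z : M, inn (x + y) z = inn x z + inn y z)
    (inn_smul_left : ∀ (a : A) (x y : M), inn (a • x) y = a * inn x y)
    (inn_star : ∀ x y : M, inn x y = star (inn y x)) (x y : M) :
    inn x y ∈ span ℂ (Set.range fun z => inn z z) := by
  rw [inn_eq_polarization inn_add_left inn_smul_left inn_star]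
  exact smul_mem _ _ <| sum_mem fun k _ => smul_mem _ _ <| subset_span ⟨_, rfl⟩

lemma inn_sqrt_smul_self (inn_smul_left : ∀ (a : A) (x y : M), inn (a • x) y = a * inn x y)
    (inn_star : ∀ x y : M, inn x y = star (inn y x)) {t : ℝ} (ht : 0 ≤ t) (x : M) :
    inn ((√t : ℂ) • x) ((√t : ℂ) • x) = t • inn x x := by
  rw [inn_complex_smul_left inn_smul_left, inn_complex_smul_right inn_smul_left inn_star,
    smul_smul, star_def, conj_ofReal, ← ofReal_mul, Real.mul_self_sqrt ht,
    Complex.coe_smul]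

end ComplexInner

section CStarAlgebra

variable {A : Type*} [CStarAlgebra A] [PartialOrder A] [StarOrderedRing A]

lemma isStrictlyPositive_of_norm_one_sub_lt_one {b : A} (hb : IsSelfAdjoint b)
    (h : ‖1 - b‖ < 1) : IsStrictlyPositive b := by
  have hle : 1 - b ≤ algebraMap ℝ A ‖1 - b‖ :=
    ((IsSelfAdjoint.one A).sub hb).le_algebraMap_norm_self
  have hge : algebraMap ℝ A (1 - ‖1 - b‖) ≤ b := by
    rw [map_sub, map_one]
    exact sub_le_comm.mp hle
  exact (isStrictlyPositive_algebraMap (sub_pos.2 h)).of_le hge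

lemma realPart_sum_smul_le {ι : Type*} (s : Finset ι) (c : ι → ℂ) {P : ι → A}
    (hP : ∀ i, 0 ≤ P i) : (ℜ (∑ i ∈ s, c i • P i) : A) ≤ ∑ i ∈ s, (c i).re⁺ • P i := by
  have hre : ∀ i, (ℜ (c i • P i) : A) = (c i).re • P i := by
    intro i
    rw [realPart_smul, imaginaryPart_eq_zero_iff.mpr (hP i).isSelfAdjoint, smul_zero, sub_zero,
      selfAdjoint.val_smul, (hP i).isSelfAdjoint.coe_realPart]
  simp only [map_sum, AddSubmonoidClass.coe_finsetSum, hre]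
  refine Finset.sum_le_sum fun i _ => ?_
  calc (c i).re • P i = (c i).re⁺ • P i - (c i).re⁻ • P i := by
        rw [← sub_smul, posPart_sub_negPart]
    _ ≤ (c i).re⁺ • P i := sub_le_self _ (smul_nonneg (negPart_nonneg _) (hP i))

end CStarAlgebra

section HilbertModule

variable {A M : Type*} [CStarAlgebra A] [PartialOrder A] [StarOrderedRing A]
  [AddCommGroup M] [Module ℂ M] [Module A M] [IsScalarTower ℂ A M] {inn : M → M → A}

lemma exists_realPart_le_sum_inn_self
    (inn_smul_left : ∀ (a : A) (x y : M), inn (a • x) y = a * inn x y)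
    (inn_star : ∀ x y : M, inn x y = star (inn y x)) (inn_self_nonneg : ∀ x : M, 0 ≤ inn x x)
    {a : A} (ha : a ∈ span ℂ (Set.range fun z => inn z z)) :
    ∃ (n : ℕ) (w : Fin n → M), (ℜ a : A) ≤ ∑ i, inn (w i) (w i) := by
  obtain ⟨n, c, g, rfl⟩ := mem_span_set'.1 ha
  choose x hx using fun i => (g i).2
  refine ⟨n, fun i => (√(c i).re⁺ : ℂ) • x i, ?_⟩
  simp only [inn_sqrt_smul_self inn_smul_left inn_star (posPart_nonneg _), hx]
  exact realPart_sum_smul_le _ c fun i => hx i ▸ inn_self_nonneg (x i)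

end HilbertModule

theorem full_hilbert_module_exists_finite_sum_inner_eq_one_general
    {A : Type*} [CStarAlgebra A] [PartialOrder A] [StarOrderedRing A]
    {M : Type*} [NormedAddCommGroup M] [NormedSpace ℂ M]
    [Module A M] [IsScalarTower ℂ A M]
    (inn : M → M → A)
    (inn_add_left : ∀ x y z : M, inn (x + y) z = inn x z + inn y z)
    (inn_smul_left : ∀ (a : A) (x y : M), inn (a • x) y = a * inn x y)
    (inn_star : ∀ x y : M, inn x y = star (inn y x))
    (inn_self_nonneg : ∀ x : M, 0 ≤ inn x x)
    (full : (Submodule.span ℂ {a : A | ∃ x y : M, inn x y = a}).topologicalClosure = ⊤)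
    :
    ∃ (n : ℕ) (x : Fin n → M), ∑ i, inn (x i) (x i) = 1 := by
  have h1 : (1 : A) ∈ closure (span ℂ {a : A | ∃ x y : M, inn x y = a} : Set A) := by
    rw [← topologicalClosure_coe, full]; trivial
  obtain ⟨a, ha, hdist⟩ := Metric.mem_closure_iff.mp h1 1 one_pos
  have ha_sq : a ∈ span ℂ (Set.range fun z => inn z z) := by
    refine span_le.2 ?_ ha
    rintro _ ⟨x, y, rfl⟩
    exact inn_mem_span_inn_self inn_add_left inn_smul_left inn_star x y
  obtain ⟨n, w, hle⟩ := exists_realPart_le_sum_inn_self inn_smul_left inn_star inn_self_nonneg ha_sq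
  have hre : ‖1 - (ℜ a : A)‖ < 1 := by
    calc ‖1 - (ℜ a : A)‖ = ‖ℜ (1 - a)‖ := by rw [map_sub, realPart_one]; rfl
      _ ≤ ‖1 - a‖ := realPart.norm_le _
      _ < 1 := by rwa [← dist_eq_norm]
  have hpos : IsStrictlyPositive (∑ i, inn (w i) (w i)) :=
    (isStrictlyPositive_of_norm_one_sub_lt_one (ℜ a).2 hre).of_le hle
  set c := (∑ i, inn (w i) (w i)) ^ (-(1 / 2) : ℝ)
  refine ⟨n, fun i => c • w i, ?_⟩
  rw [sum_inn_smul_self inn_smul_left inn_star, CFC.rpow_nonneg.isSelfAdjoint.star_eq]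
  exact CFC.conjugate_rpow_neg_one_half _ hpos

/-- **Lemma 1.** If `M` is a full Hilbert module over a unital C*-algebra `A`, then there is a
finite family `x₁, …, xₙ` in `M` with `∑ ⟨xᵢ, xᵢ⟩ = 1`. -/
theorem full_hilbert_module_exists_finite_sum_inner_eq_one
    {A : Type*} [CStarAlgebra A] [PartialOrder A] [StarOrderedRing A]
    {M : Type*} [NormedAddCommGroup M] [CompleteSpace M] [NormedSpace ℂ M]
    [Module A M] [IsScalarTower ℂ A M] [IsBoundedSMul A M]
    (inn : M → M → A)
    (inn_add_left : ∀ x y z : M, inn (x + y) z = inn x z + inn y z)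
    (inn_smul_left : ∀ (a : A) (x y : M), inn (a • x) y = a * inn x y)
    (inn_star : ∀ x y : M, inn x y = star (inn y x))
    (inn_self_nonneg : ∀ x : M, 0 ≤ inn x x)
    (inn_definite : ∀ x : M, inn x x = 0 → x = 0)
    (norm_eq : ∀ x : M, ‖x‖ = Real.sqrt ‖inn x x‖)
    (full : (Submodule.span ℂ {a : A | ∃ x y : M, inn x y = a}).topologicalClosure = ⊤)
    :
    ∃ (n : ℕ) (x : Fin n → M), ∑ i, inn (x i) (x i) = 1 :=
  full_hilbert_module_exists_finite_sum_inner_eq_one_general inn inn_add_left inn_smul_left inn_star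
    inn_self_nonneg full
end

section
/- Let A be a commutative C*-algebra with unit e and let M be a full Hilbert A-module. Then the center of End_A(M) equals {T_a : a ∈ A}, where T_a is the operator x ↦ a x. -/
set_option synthInstance.maxHeartbeats 1000000
set_option maxHeartbeats 1000000

/-- `End_A(M)`: the algebra of all bounded `A`-linear operators on `M`, realized as a
subalgebra of the bounded `ℂ`-linear operators on `M`. -/
def EndA (A : Type*) (M : Type*) [CStarAlgebra A] [NormedAddCommGroup M] [NormedSpace ℂ M]
    [Module A M] [IsScalarTower ℂ A M] : Subalgebra ℂ (M →L[ℂ] M) where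
  carrier := {T | ∀ (a : A) (x : M), T (a • x) = a • T x}
  add_mem' := by
    intro S T hS hT a x
    simp [hS a x, hT a x]
  mul_mem' := by
    intro S T hS hT a x
    simp only [ContinuousLinearMap.mul_apply, hT a x, hS a (T x)]
  one_mem' := by intro a x; simp
  zero_mem' := by intro a x; simp
  algebraMap_mem' := by
    intro c a x
    simp only [Algebra.algebraMap_eq_smul_one, ContinuousLinearMap.smul_apply,
      ContinuousLinearMap.one_apply]
    exact smul_comm c a x

/-! A central `T` commutes with every rank-one operator `v ↦ ⟪w, v⟫ • x`, which gives
`⟪w, z⟫ • T x = ⟪w, T z⟫ • x`. So the `s ∈ A` for which `s • T` is a multiplication operator form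
a left ideal containing every inner product; by fullness this ideal is dense, and a dense ideal of
a unital Banach algebra is everything because the units form an open set. Thus `1` lies in it,
i.e. `T` itself is a multiplication operator. -/

theorem Ideal.eq_top_of_dense {R : Type*} [NormedRing R] [HasSummableGeomSeries R]
    (I : Ideal R) (hdense : Dense (I : Set R)) : I = ⊤ := by
  by_contra hI
  exact I.closure_ne_top hI (SetLike.coe_injective hdense.closure_eq)

def multiplierIdeal (A : Type*) {E : Type*} [Semiring A] [AddCommMonoid E] [Module A E]
    (T : E → E) : Ideal A where
  carrier := {s | ∃ b : A, ∀ x, s • T x = b • x}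
  zero_mem' := ⟨0, fun x ↦ by simp only [zero_smul]⟩
  add_mem' := by
    rintro s t ⟨b, hb⟩ ⟨c, hc⟩
    exact ⟨b + c, fun x ↦ by simp only [add_smul, hb, hc]⟩
  smul_mem' := by
    rintro c s ⟨b, hb⟩
    exact ⟨c * b, fun x ↦ by simp only [smul_eq_mul, mul_smul, hb]⟩

theorem exists_forall_eq_smul_of_one_mem_multiplierIdeal {A E : Type*} [Semiring A]
    [AddCommMonoid E] [Module A E] {T : E → E} (h : (1 : A) ∈ multiplierIdeal A T) :
    ∃ b : A, ∀ x, T x = b • x :=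
  let ⟨b, hb⟩ := h
  ⟨b, fun x ↦ by rw [← hb, one_smul]⟩

section EndA

variable {A E : Type*} [CStarAlgebra A] [NormedAddCommGroup E] [NormedSpace ℂ E] [Module A E]
  [IsScalarTower ℂ A E]

theorem mem_center_EndA_of_forall_apply_eq_smul {T : EndA A E} {a : A}
    (hT : ∀ x, (T : E →L[ℂ] E) x = a • x) : T ∈ Set.center (EndA A E) := by
  refine Semigroup.mem_center_iff.mpr fun S ↦ Subtype.ext (ContinuousLinearMap.ext fun x ↦ ?_)
  change (S : E →L[ℂ] E) ((T : E →L[ℂ] E) x) = (T : E →L[ℂ] E) ((S : E →L[ℂ] E) x)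
  rw [hT, hT, S.2]

open scoped InnerProductSpace

variable [PartialOrder A] [StarOrderedRing A] [ContinuousSMul A E] [CStarModule A E]

variable (A) in
noncomputable def rankOneEndA (w x : E) : EndA A E :=
  ⟨(CStarModule.innerSL (A := A) w).smulRight x, fun a v ↦ by
    simp [CStarModule.innerSL_apply, mul_smul]⟩

theorem rankOneEndA_apply (w x v : E) : (rankOneEndA A w x : E →L[ℂ] E) v = ⟪w, v⟫_A • x := rfl

theorem inner_mem_multiplierIdeal_of_mem_center {T : EndA A E} (hT : T ∈ Set.center (EndA A E))
    (w z : E) : ⟪w, z⟫_A ∈ multiplierIdeal A (T : E →L[ℂ] E) := by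
  refine ⟨⟪w, (T : E →L[ℂ] E) z⟫_A, fun x ↦ ?_⟩
  have hcomm := congr($(Semigroup.mem_center_iff.mp hT (rankOneEndA A w x)).1 z)
  change (rankOneEndA A w x : E →L[ℂ] E) ((T : E →L[ℂ] E) z) =
    (T : E →L[ℂ] E) ((rankOneEndA A w x : E →L[ℂ] E) z) at hcomm
  rw [rankOneEndA_apply, rankOneEndA_apply, T.2] at hcomm
  exact hcomm.symm

theorem center_EndA_eq_setOf_forall_apply_eq_smul
    (hfull : (Submodule.span ℂ {a : A | ∃ x y : E, ⟪x, y⟫_A = a}).topologicalClosure = ⊤) :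
    Set.center (EndA A E) = {T : EndA A E | ∃ a : A, ∀ x, (T : E →L[ℂ] E) x = a • x} := by
  ext T
  refine ⟨fun hT ↦ ?_, fun ⟨a, ha⟩ ↦ mem_center_EndA_of_forall_apply_eq_smul ha⟩
  apply exists_forall_eq_smul_of_one_mem_multiplierIdeal
  have hspan : Submodule.span ℂ {a : A | ∃ x y : E, ⟪x, y⟫_A = a} ≤
      (multiplierIdeal A (T : E →L[ℂ] E)).restrictScalars ℂ := by
    rw [Submodule.span_le]
    rintro _ ⟨w, z, rfl⟩
    exact inner_mem_multiplierIdeal_of_mem_center hT w z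
  have hdense := (Submodule.dense_iff_topologicalClosure_eq_top.mpr hfull).mono hspan
  rw [Ideal.eq_top_of_dense _ hdense]
  trivial

end EndA

variable {A : Type*} [CommCStarAlgebra A] [PartialOrder A] [StarOrderedRing A]
variable {M : Type*} [NormedAddCommGroup M] [CompleteSpace M] [NormedSpace ℂ M]
  [Module A M] [IsScalarTower ℂ A M] [IsBoundedSMul A M]

/-- **Lemma 4.** For a commutative unital C*-algebra `A` and a full Hilbert `A`-module `M`, the
center of `End_A(M)` consists exactly of the operators `T_a : x ↦ a • x` for `a ∈ A`. -/
theorem center_EndA_eq_smul_operators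
    (inn : M → M → A)
    (inn_add_left : ∀ x y z : M, inn (x + y) z = inn x z + inn y z)
    (inn_smul_left : ∀ (a : A) (x y : M), inn (a • x) y = a * inn x y)
    (inn_star : ∀ x y : M, inn x y = star (inn y x))
    (inn_self_nonneg : ∀ x : M, 0 ≤ inn x x)
    (inn_definite : ∀ x : M, inn x x = 0 → x = 0)
    (norm_eq : ∀ x : M, ‖x‖ = Real.sqrt ‖inn x x‖)
    (full : (Submodule.span ℂ {a : A | ∃ x y : M, inn x y = a}).topologicalClosure = ⊤)
    :
    Set.center ↥(EndA A M) =
      {T : ↥(EndA A M) | ∃ a : A, ∀ x : M, (T : M →L[ℂ] M) x = a • x} := by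
  -- Mathlib's inner products are linear in the second variable, hence the swap.
  let _ : CStarModule A M :=
    { inner x y := inn y x
      inner_add_right := inn_add_left _ _ _
      inner_self_nonneg := inn_self_nonneg _
      inner_self := ⟨inn_definite _, by
        rintro rfl
        simpa only [zero_smul, zero_mul] using inn_smul_left 0 0 0⟩
      inner_op_smul_right := inn_smul_left _ _ _
      inner_smul_right_complex {z x y} := by
        rw [← smul_one_smul A z y, inn_smul_left, smul_one_mul]
      star_inner x y := (inn_star x y).symm
      norm_eq_sqrt_norm_inner_self := norm_eq }
  refine center_EndA_eq_setOf_forall_apply_eq_smul ?_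
  convert full using 3
  ext a
  exact ⟨fun ⟨x, y, h⟩ ↦ ⟨y, x, h⟩, fun ⟨x, y, h⟩ ↦ ⟨y, x, h⟩⟩
end

section
/- Let A be a commutative unital C*-algebra and let M be a full Hilbert A-module. Then every derivation d on End_A(M) is A-linear, i.e. d(aT) = a d(T) for every a ∈ A and T ∈ End_A(M), where aT denotes the operator x ↦ a T(x). -/
/-! For an `A`-linear functional `f` on `M` and `x : M`, the map `b ↦ f (d (b • 1) x)` is a
derivation of the commutative C⋆-algebra `A` into itself, and such derivations vanish: the kernel
`I` of a character `φ` satisfies `I ≤ I * I` (a positive element of `I` is the square of its square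
root, which again lies in `I`), a derivation maps `I * I` into `I`, and `D b = D (b - φ b • 1)`, so
`φ (D b) = 0` for every character. Taking `f = inn · (d (a • 1) x)` gives `d (a • 1) = 0`, hence
`d (a • T) = d ((a • 1) * T) = (a • 1) * d T`. -/

set_option synthInstance.maxHeartbeats 1000000
set_option maxHeartbeats 1000000

variable {A : Type*} [CommCStarAlgebra A] [PartialOrder A] [StarOrderedRing A]
variable {M : Type*} [NormedAddCommGroup M] [CompleteSpace M] [NormedSpace ℂ M]
  [Module A M] [IsScalarTower ℂ A M] [IsBoundedSMul A M]

/-- The natural `A`-scalar action on `End_A(M)` (for commutative `A`):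
`(a • T) x = a • T x`. -/
noncomputable instance : SMul A ↥(EndA A M) where
  smul a T := ⟨a • (T : M →L[ℂ] M), by
    intro b x
    simp only [ContinuousLinearMap.coe_smul', Pi.smul_apply, T.2 b x, smul_smul, mul_comm a b]⟩

open WeakDual ComplexStarModule

namespace WeakDual.CharacterSpace

lemma mem_ker_mul_ker_of_nonneg (φ : characterSpace ℂ A) {p : A} (hp : 0 ≤ p) (hφp : φ p = 0) :
    p ∈ RingHom.ker φ * RingHom.ker φ := by
  have hsqrt : φ (CFC.sqrt p) = 0 := by
    rw [← mul_self_eq_zero, ← map_mul, CFC.sqrt_mul_sqrt_self p hp, hφp]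
  rw [← CFC.sqrt_mul_sqrt_self p hp]
  exact Ideal.mul_mem_mul hsqrt hsqrt

lemma mem_ker_mul_ker_of_isSelfAdjoint (φ : characterSpace ℂ A) {v : A} (hv : IsSelfAdjoint v)
    (hφv : φ v = 0) : v ∈ RingHom.ker φ * RingHom.ker φ := by
  have hprod : φ v⁺ * φ v⁻ = 0 := by rw [← map_mul, CFC.posPart_mul_negPart, map_zero]
  have hdiff : φ v⁺ = φ v⁻ := by
    rw [← sub_eq_zero, ← map_sub, CFC.posPart_sub_negPart v hv, hφv]
  have hpos : φ v⁺ = 0 := by rwa [← hdiff, mul_self_eq_zero] at hprod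
  rw [← CFC.posPart_sub_negPart v hv]
  exact sub_mem (mem_ker_mul_ker_of_nonneg φ (CFC.posPart_nonneg v) hpos)
    (mem_ker_mul_ker_of_nonneg φ (CFC.negPart_nonneg v) (hdiff ▸ hpos))

lemma ker_le_ker_mul_ker (φ : characterSpace ℂ A) :
    RingHom.ker φ ≤ RingHom.ker φ * RingHom.ker φ := by
  intro a ha
  have hre : φ (ℜ a : A) = 0 := by
    rw [map_realPart, RingHom.mem_ker.mp ha, map_zero, ZeroMemClass.coe_zero]
  have him : φ (ℑ a : A) = 0 := by
    rw [map_imaginaryPart, RingHom.mem_ker.mp ha, map_zero, ZeroMemClass.coe_zero]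
  rw [← realPart_add_I_smul_imaginaryPart a]
  exact add_mem (mem_ker_mul_ker_of_isSelfAdjoint φ (ℜ a).2 hre)
    (Submodule.smul_of_tower_mem _ _ (mem_ker_mul_ker_of_isSelfAdjoint φ (ℑ a).2 him))

end WeakDual.CharacterSpace

lemma Derivation.map_mem_of_mem_mul {R B : Type*} [CommSemiring R] [CommSemiring B] [Algebra R B]
    (D : Derivation R B B) (I : Ideal B) {b : B} (hb : b ∈ I * I) : D b ∈ I := by
  refine Submodule.mul_induction_on hb (fun g hg h hh => ?_) (fun u v hu hv => ?_)
  · rw [D.leibniz, smul_eq_mul, smul_eq_mul]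
    exact add_mem (I.mul_mem_right _ hg) (I.mul_mem_right _ hh)
  · rw [map_add]
    exact add_mem hu hv

theorem Derivation.eq_zero_of_commCStarAlgebra (D : Derivation ℂ A A) : D = 0 := by
  ext a
  refine (gelfandTransform_isometry A).injective ?_
  ext φ
  have hker : a - algebraMap ℂ A (φ a) ∈ RingHom.ker φ := by
    rw [RingHom.mem_ker, map_sub, AlgHomClass.commutes, Algebra.algebraMap_self_apply, sub_self]
  have hDa : D a = D (a - algebraMap ℂ A (φ a)) := by rw [map_sub, D.map_algebraMap, sub_zero]
  rw [gelfandTransform_apply_apply, gelfandTransform_apply_apply, Derivation.zero_apply, map_zero,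
    hDa]
  exact D.map_mem_of_mem_mul _ (CharacterSpace.ker_le_ker_mul_ker φ hker)

namespace EndA

omit [PartialOrder A] [StarOrderedRing A] [CompleteSpace M] in
lemma coe_smul (a : A) (T : EndA A M) :
    ((a • T : EndA A M) : M →L[ℂ] M) = a • (T : M →L[ℂ] M) :=
  rfl

noncomputable def scalar : A →ₐ[ℂ] EndA A M where
  toFun b := b • 1
  map_one' := Subtype.ext <| ContinuousLinearMap.ext <| one_smul A
  map_mul' b c := Subtype.ext <| ContinuousLinearMap.ext <| mul_smul b c
  map_zero' := Subtype.ext <| ContinuousLinearMap.ext <| zero_smul A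
  map_add' b c := Subtype.ext <| ContinuousLinearMap.ext <| add_smul b c
  commutes' c := Subtype.ext <| ContinuousLinearMap.ext fun x => algebraMap_smul A c x

omit [PartialOrder A] [StarOrderedRing A] [CompleteSpace M] in
lemma scalar_mul (b : A) (T : EndA A M) : scalar b * T = b • T :=
  Subtype.ext <| ContinuousLinearMap.ext fun _ => rfl

omit [PartialOrder A] [StarOrderedRing A] [CompleteSpace M] in
lemma mul_scalar (b : A) (T : EndA A M) : T * scalar b = b • T :=
  Subtype.ext <| ContinuousLinearMap.ext fun x => T.2 b x

omit [PartialOrder A] [StarOrderedRing A] [CompleteSpace M] in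
lemma map_scalar_mul (d : EndA A M →ₗ[ℂ] EndA A M)
    (hd : ∀ S T : EndA A M, d (S * T) = d S * T + S * d T) (b c : A) :
    d (scalar (b * c)) = b • d (scalar c) + c • d (scalar b) := by
  rw [map_mul, hd, mul_scalar, scalar_mul, add_comm]

omit [CompleteSpace M] in
theorem map_apply_derivation_scalar_eq_zero (f : M →ₗ[A] A) (d : EndA A M →ₗ[ℂ] EndA A M)
    (hd : ∀ S T : EndA A M, d (S * T) = d S * T + S * d T) (b : A) (x : M) :
    f ((d (scalar b) : M →L[ℂ] M) x) = 0 := by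
  let δ : A →ₗ[ℂ] A := f.restrictScalars ℂ ∘ₗ (ContinuousLinearMap.apply ℂ M x).toLinearMap ∘ₗ
    (EndA A M).val.toLinearMap ∘ₗ d ∘ₗ (scalar : A →ₐ[ℂ] EndA A M).toLinearMap
  have hδ : ∀ b c, δ (b * c) = b • δ c + c • δ b := fun b c => by
    simp only [δ, LinearMap.coe_comp, LinearMap.coe_restrictScalars, ContinuousLinearMap.coe_coe,
      AlgHom.coe_toLinearMap, Subalgebra.coe_val, Function.comp_apply,
      ContinuousLinearMap.apply_apply]
    rw [map_scalar_mul d hd]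
    simp only [AddMemClass.coe_add, coe_smul, add_apply, smul_apply, map_add, map_smul, smul_eq_mul]
  exact DFunLike.congr_fun (Derivation.eq_zero_of_commCStarAlgebra (Derivation.mk' δ hδ)) b

end EndA

theorem derivation_on_EndA_is_A_linear_general
    (inn : M → M → A)
    (inn_add_left : ∀ x y z : M, inn (x + y) z = inn x z + inn y z)
    (inn_smul_left : ∀ (a : A) (x y : M), inn (a • x) y = a * inn x y)
    (inn_definite : ∀ x : M, inn x x = 0 → x = 0)
    (d : ↥(EndA A M) →ₗ[ℂ] ↥(EndA A M))
    (hd : ∀ S T : ↥(EndA A M), d (S * T) = d S * T + S * d T)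
    (a : A) (T : ↥(EndA A M)) :
    d (a • T) = a • d T := by
  have hscalar : d (EndA.scalar a) = 0 := by
    refine Subtype.ext <| ContinuousLinearMap.ext fun x => ?_
    set w := (d (EndA.scalar a) : M →L[ℂ] M) x
    let innLeft : M →ₗ[A] A :=
      { toFun := (inn · w)
        map_add' := (inn_add_left · · w)
        map_smul' := (inn_smul_left · · w) }
    exact inn_definite w (EndA.map_apply_derivation_scalar_eq_zero innLeft d hd a x)
  rw [← EndA.scalar_mul, hd, hscalar, zero_mul, zero_add, EndA.scalar_mul]

/-- **Lemma 6.** Every derivation on `End_A(M)` (for `A` commutative unital, `M` full) is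
`A`-linear: `d (a • T) = a • d T`. -/
theorem derivation_on_EndA_is_A_linear
    (inn : M → M → A)
    (inn_add_left : ∀ x y z : M, inn (x + y) z = inn x z + inn y z)
    (inn_smul_left : ∀ (a : A) (x y : M), inn (a • x) y = a * inn x y)
    (inn_star : ∀ x y : M, inn x y = star (inn y x))
    (inn_self_nonneg : ∀ x : M, 0 ≤ inn x x)
    (inn_definite : ∀ x : M, inn x x = 0 → x = 0)
    (norm_eq : ∀ x : M, ‖x‖ = Real.sqrt ‖inn x x‖)
    (full : (Submodule.span ℂ {a : A | ∃ x y : M, inn x y = a}).topologicalClosure = ⊤)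
    (d : ↥(EndA A M) →ₗ[ℂ] ↥(EndA A M))
    (hd : ∀ S T : ↥(EndA A M), d (S * T) = d S * T + S * d T)
    (a : A) (T : ↥(EndA A M)) :
    d (a • T) = a • d T :=
  derivation_on_EndA_is_A_linear_general inn inn_add_left inn_smul_left inn_definite d hd a T
end

section
/- Let A be a commutative unital C*-algebra and let M be a full Hilbert A-module. Then every derivation on End_A(M) is continuous (norm-bounded). -/
set_option synthInstance.maxHeartbeats 1000000
set_option maxHeartbeats 1000000

variable {A : Type*} [CommCStarAlgebra A] [PartialOrder A] [StarOrderedRing A]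
variable {M : Type*} [NormedAddCommGroup M] [CompleteSpace M] [NormedSpace ℂ M]
  [Module A M] [IsScalarTower ℂ A M] [IsBoundedSMul A M]

/-!
Fullness gives `u, v` with `∑ ⟪v i, u i⟫ = 1`, so every `x` equals `∑ θ(x, v i) (u i)`, where
`θ(y, z) x = ⟪z, x⟫ • y` are the rank-one operators. For `S x = ∑ d θ(x, v i) (u i)`, the Leibniz
rule and `T θ(x, z) = θ(T x, z)` give `d T = S T - T S`. On the centre `{a • ·}` of `End_A(M)`,
`d` induces a derivation of the commutative C⋆-algebra `A`; it vanishes, because every character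
kills it (on positive elements by taking square roots). So `d (a • ·) = 0`, i.e. `S` is
`A`-linear. Then `S θ(y, z) - θ(y, z) S = d θ(y, z)` is bounded for all `y, z`, which by fullness
makes the graph of `S` closed. Hence `S` is bounded and `‖d T‖ ≤ 2 ‖S‖ ‖T‖`.
-/

open scoped ComplexStarModule

section CommutativeDerivation

variable (D : Derivation ℂ A A) (χ : WeakDual.characterSpace ℂ A)

lemma character_derivation_eq_zero_of_nonneg {p : A} (hp : 0 ≤ p) (hχp : χ p = 0) :
    χ (D p) = 0 := by
  have hsq := CFC.sqrt_mul_sqrt_self p hp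
  have hχ : χ (CFC.sqrt p) = 0 := mul_self_eq_zero.mp (by rw [← map_mul, hsq, hχp])
  rw [← hsq, D.leibniz, smul_eq_mul, map_add, map_mul, hχ, zero_mul, add_zero]

lemma character_derivation_eq_zero_of_isSelfAdjoint {b : A} (hb : IsSelfAdjoint b)
    (hχb : χ b = 0) : χ (D b) = 0 := by
  have heq : χ b⁺ = χ b⁻ := by
    rw [← sub_eq_zero, ← map_sub, CFC.posPart_sub_negPart b hb, hχb]
  have hpos : χ b⁺ = 0 := by
    apply mul_self_eq_zero.mp
    nth_rewrite 2 [heq]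
    rw [← map_mul, CFC.posPart_mul_negPart, map_zero]
  rw [← CFC.posPart_sub_negPart b hb, map_sub, map_sub,
    character_derivation_eq_zero_of_nonneg D χ (CFC.posPart_nonneg b) hpos,
    character_derivation_eq_zero_of_nonneg D χ (CFC.negPart_nonneg b) (heq ▸ hpos), sub_zero]

lemma character_derivation_eq_zero (a : A) : χ (D a) = 0 := by
  set b := a - χ a • 1 with hb
  have hχb : χ b = 0 := by simp [hb, map_smul]
  have hDb : D b = D a := by simp [hb]
  have hre : χ (ℜ b : A) = 0 := by simp [realPart_apply_coe, ← Complex.coe_smul, map_star, hχb]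
  have him : χ (ℑ b : A) = 0 := by
    simp [imaginaryPart_apply_coe, ← Complex.coe_smul, map_star, hχb]
  rw [← hDb, ← realPart_add_I_smul_imaginaryPart b, map_add, D.map_smul, map_add, map_smul,
    character_derivation_eq_zero_of_isSelfAdjoint D χ (ℜ b).2 hre,
    character_derivation_eq_zero_of_isSelfAdjoint D χ (ℑ b).2 him, smul_zero, add_zero]

theorem CommCStarAlgebra.derivation_eq_zero : D = 0 := by
  ext a
  apply (gelfandTransform_isometry A).injective
  ext χ
  simpa using character_derivation_eq_zero D χ a

end CommutativeDerivation

open CStarModule ContinuousLinearMap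
open scoped InnerProductSpace

lemma commute_map_of_leibniz {B : Type*} [Ring B] {d : B → B}
    (hd : ∀ S T, d (S * T) = d S * T + S * d T) {c : B} (hc : ∀ T, Commute c T) (T : B) :
    Commute (d c) T := by
  have h := hd c T
  rw [(hc T).eq, hd, (hc (d T)).eq] at h
  exact add_left_cancel ((add_comm _ _).trans h.symm)

lemma continuous_of_eq_commutator {B F : Type*} [NonUnitalSeminormedRing B] [FunLike F B B]
    [AddMonoidHomClass F B B] (d : F) (S : B) (hS : ∀ T, d T = S * T - T * S) :
    Continuous d :=
  AddMonoidHomClass.continuous_of_bound d (2 * ‖S‖) fun T => calc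
    ‖d T‖ ≤ ‖S * T‖ + ‖T * S‖ := hS T ▸ norm_sub_le _ _
    _ ≤ ‖S‖ * ‖T‖ + ‖T‖ * ‖S‖ := add_le_add (norm_mul_le _ _) (norm_mul_le _ _)
    _ = 2 * ‖S‖ * ‖T‖ := by ring

section

omit [StarOrderedRing A] [CompleteSpace M] [IsScalarTower ℂ A M] [IsBoundedSMul A M]

lemma CStarModule.exists_sum_inner_eq_one [CStarModule A M]
    (hfull : (Submodule.span ℂ {a : A | ∃ x y : M, ⟪x, y⟫_A = a}).topologicalClosure = ⊤) :
    ∃ (n : ℕ) (u v : Fin n → M), ∑ i, ⟪v i, u i⟫_A = 1 := by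
  set s := {a : A | ∃ x y : M, ⟪x, y⟫_A = a}
  have h1 : (1 : A) ∈ closure (Submodule.span ℂ s : Set A) := by
    rw [← Submodule.topologicalClosure_coe, hfull]
    trivial
  obtain ⟨t, hts, ht⟩ := Metric.mem_closure_iff.mp h1 1 one_pos
  have hspan : Ideal.span s = ⊤ :=
    Ideal.eq_top_of_norm_lt_one _ (Submodule.span_le_restrictScalars ℂ A s hts)
      (by rwa [← dist_eq_norm])
  have hone : (1 : A) ∈ Ideal.span s := hspan ▸ Submodule.mem_top
  obtain ⟨n, f, g, hfg⟩ := Submodule.mem_span_set'.mp hone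
  choose x y hxy using fun i => (g i).2
  exact ⟨n, fun i => f i • y i, x, by simpa [hxy] using hfg⟩

end

namespace EndA

instance : CoeFun (EndA A M) fun _ => M → M := ⟨fun T => (T : M →L[ℂ] M)⟩

omit [PartialOrder A] [StarOrderedRing A] [CompleteSpace M] [IsBoundedSMul A M] in
lemma apply_smul (T : EndA A M) (a : A) (x : M) : T (a • x) = a • T x := T.2 a x

section MulOp

omit [PartialOrder A] [StarOrderedRing A] [CompleteSpace M]

noncomputable def mulOp : A →ₐ[ℂ] EndA A M where
  toFun a := ⟨lsmul ℂ A a, fun b x => smul_comm a b x⟩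
  map_one' := by ext; simp
  map_mul' a b := by ext; simp [mul_smul]
  map_zero' := by ext; simp
  map_add' a b := by ext; simp
  commutes' c := by ext; simp [Algebra.algebraMap_eq_smul_one]

@[simp] lemma mulOp_apply (a : A) (x : M) : mulOp a x = a • x := rfl

lemma commute_mulOp (a : A) (T : EndA A M) : Commute (mulOp a) T := by
  ext x
  simp [apply_smul]

end MulOp

variable [CStarModule A M]

section

omit [CompleteSpace M]

variable (A) in
noncomputable def rankOne (y z : M) : EndA A M :=
  ⟨(innerSL z : M →L[ℂ] A).smulRight y, fun a x => by simp [innerSL_apply, mul_smul]⟩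

@[simp] lemma rankOne_apply (y z x : M) : rankOne A y z x = ⟪z, x⟫_A • y := rfl

lemma rankOne_add (y y' z : M) : rankOne A (y + y') z = rankOne A y z + rankOne A y' z := by
  ext x
  simp [smul_add]

lemma rankOne_smul (c : ℂ) (y z : M) : rankOne A (c • y) z = c • rankOne A y z := by
  ext x
  simp [smul_comm _ c]

lemma mul_rankOne (T : EndA A M) (y z : M) : T * rankOne A y z = rankOne A (T y) z := by
  ext x
  simp [apply_smul]

section UnitDecomposition

variable {n : ℕ} {u v : Fin n → M}

variable (u v) in
@[simps]
def coeff : EndA A M →ₗ[ℂ] A where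
  toFun T := ∑ i, ⟪v i, T (u i)⟫_A
  map_add' S T := by simp [Finset.sum_add_distrib]
  map_smul' c T := by simp [Finset.smul_sum]

variable (huv : ∑ i, ⟪v i, u i⟫_A = 1)
include huv

lemma sum_rankOne_apply (x : M) : ∑ i, rankOne A x (v i) (u i) = x := by
  simp [← Finset.sum_smul, huv]

omit [StarOrderedRing A] in
lemma coeff_mulOp (a : A) : coeff u v (mulOp a) = a := by
  simp [← Finset.mul_sum, huv]

lemma eq_mulOp_coeff_of_commute {C : EndA A M} (hC : ∀ y z, Commute C (rankOne A y z)) :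
    C = mulOp (coeff u v C) := by
  ext y
  calc C y = ∑ i, C (rankOne A y (v i) (u i)) := by rw [← map_sum, sum_rankOne_apply huv]
    _ = ∑ i, rankOne A y (v i) (C (u i)) := by
      simp only [← mul_apply_eq_comp, ← Subalgebra.coe_mul, (hC _ _).eq]
    _ = mulOp (coeff u v C) y := by simp

lemma eq_zero_of_forall_rankOne_apply_eq_zero {w : M} (hw : ∀ y z, rankOne A y z w = 0) :
    w = 0 := by
  refine (inner_self (A := A)).mp ?_
  calc ⟪w, w⟫_A = ∑ i, ⟪v i, rankOne A (u i) w w⟫_A := by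
        simp [← Finset.mul_sum, huv]
    _ = 0 := by simp [hw]

end UnitDecomposition

section Implementer

variable (d : EndA A M →ₗ[ℂ] EndA A M) {n : ℕ} {u v : Fin n → M}

variable (u v) in
@[simps]
noncomputable def implementer : M →ₗ[ℂ] M where
  toFun x := ∑ i, d (rankOne A x (v i)) (u i)
  map_add' x y := by simp [rankOne_add, Finset.sum_add_distrib]
  map_smul' c x := by simp [rankOne_smul, Finset.smul_sum]

variable (hd : ∀ S T, d (S * T) = d S * T + S * d T) (huv : ∑ i, ⟪v i, u i⟫_A = 1)
include hd huv

lemma derivation_apply_eq_commutator (T : EndA A M) (x : M) :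
    d T x = implementer d u v (T x) - T (implementer d u v x) := by
  suffices implementer d u v (T x) = d T x + T (implementer d u v x) by
    rw [this, add_sub_cancel_right]
  calc implementer d u v (T x)
      = ∑ i, (d T (rankOne A x (v i) (u i)) + T (d (rankOne A x (v i)) (u i))) := by
        simp [← mul_rankOne, hd]
    _ = d T x + T (implementer d u v x) := by
        rw [Finset.sum_add_distrib, ← map_sum, ← map_sum, sum_rankOne_apply huv, implementer_apply]

lemma derivation_mulOp_eq_mulOp (a : A) : d (mulOp a) = mulOp (coeff u v (d (mulOp a))) :=
  eq_mulOp_coeff_of_commute huv fun _ _ => commute_map_of_leibniz hd (commute_mulOp a) _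

/-- `coeff u v` inverts `mulOp` (`coeff_mulOp`), so this is `d` on the centre `mulOp '' A`. -/
noncomputable def centerDerivation : Derivation ℂ A A :=
  Derivation.mk' (coeff u v ∘ₗ d ∘ₗ (mulOp : A →ₐ[ℂ] EndA A M).toLinearMap) fun a b => by
    simp only [LinearMap.comp_apply, AlgHom.toLinearMap_apply, map_mul, hd]
    rw [derivation_mulOp_eq_mulOp d hd huv a, derivation_mulOp_eq_mulOp d hd huv b]
    simp only [← map_mul, ← map_add, coeff_mulOp huv, smul_eq_mul]
    ring

lemma derivation_mulOp_eq_zero (a : A) : d (mulOp a) = 0 := by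
  rw [derivation_mulOp_eq_mulOp d hd huv a]
  change mulOp (centerDerivation d hd huv a) = 0
  rw [CommCStarAlgebra.derivation_eq_zero (centerDerivation d hd huv), Derivation.zero_apply,
    map_zero]

lemma implementer_smul (a : A) (x : M) : implementer d u v (a • x) = a • implementer d u v x := by
  have h := derivation_apply_eq_commutator d hd huv (mulOp a) x
  simp only [derivation_mulOp_eq_zero d hd huv, mulOp_apply, ZeroMemClass.coe_zero,
    zero_apply] at h
  exact sub_eq_zero.mp h.symm

end Implementer

end

open Filter Topology in
theorem continuous_of_continuous_commutator_rankOne {n : ℕ} {u v : Fin n → M}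
    (huv : ∑ i, ⟪v i, u i⟫_A = 1) {S : M →ₗ[ℂ] M} (hS : ∀ (a : A) x, S (a • x) = a • S x)
    (hcomm : ∀ y z : M, Continuous fun x => S (rankOne A y z x) - rankOne A y z (S x)) :
    Continuous S := by
  refine S.continuous_of_seq_closed_graph fun xs x y hx hSx => ?_
  refine (sub_eq_zero.mp (eq_zero_of_forall_rankOne_apply_eq_zero huv fun y' z => ?_)).symm
  have h₁ := ((hcomm y' z).tendsto x).comp hx
  have h₂ : Tendsto (fun k => ⟪z, xs k⟫_A • S y' - ⟪z, S (xs k)⟫_A • y') atTop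
      (𝓝 (⟪z, x⟫_A • S y' - ⟪z, y⟫_A • y')) :=
    ((((innerSL z).continuous.tendsto x).comp hx).smul_const (S y')).sub
      ((((innerSL z).continuous.tendsto y).comp hSx).smul_const y')
  simp only [rankOne_apply, hS] at h₁
  have := tendsto_nhds_unique h₁ h₂
  rw [sub_right_inj] at this
  rw [rankOne_apply, CStarModule.inner_sub_right, sub_smul, this, sub_self]

theorem exists_eq_commutator
    (hfull : (Submodule.span ℂ {a : A | ∃ x y : M, ⟪x, y⟫_A = a}).topologicalClosure = ⊤)
    (d : EndA A M →ₗ[ℂ] EndA A M) (hd : ∀ S T, d (S * T) = d S * T + S * d T) :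
    ∃ S : EndA A M, ∀ T, d T = S * T - T * S := by
  obtain ⟨n, u, v, huv⟩ := CStarModule.exists_sum_inner_eq_one hfull
  have hS := continuous_of_continuous_commutator_rankOne huv (implementer_smul d hd huv)
    fun y z => (d (rankOne A y z)).1.continuous.congr (derivation_apply_eq_commutator d hd huv _)
  refine ⟨⟨⟨implementer d u v, hS⟩, implementer_smul d hd huv⟩, fun T => ?_⟩
  ext x
  simp [derivation_apply_eq_commutator d hd huv T x]

theorem continuous_derivation
    (hfull : (Submodule.span ℂ {a : A | ∃ x y : M, ⟪x, y⟫_A = a}).topologicalClosure = ⊤)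
    (d : EndA A M →ₗ[ℂ] EndA A M) (hd : ∀ S T, d (S * T) = d S * T + S * d T) :
    Continuous d :=
  let ⟨S, hS⟩ := exists_eq_commutator hfull d hd
  continuous_of_eq_commutator d S hS

end EndA

/-- Mathlib's `⟪x, y⟫_A` is `A`-linear in `y`, so an inner product linear in its first variable
enters swapped. -/
abbrev CStarModule.ofInnerLinearLeft (inn : M → M → A)
    (inn_add_left : ∀ x y z : M, inn (x + y) z = inn x z + inn y z)
    (inn_smul_left : ∀ (a : A) (x y : M), inn (a • x) y = a * inn x y)
    (inn_star : ∀ x y : M, inn x y = star (inn y x))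
    (inn_self_nonneg : ∀ x : M, 0 ≤ inn x x)
    (norm_eq : ∀ x : M, ‖x‖ = Real.sqrt ‖inn x x‖) : CStarModule A M where
  inner x y := inn y x
  inner_add_right := inn_add_left _ _ _
  inner_self_nonneg := inn_self_nonneg _
  inner_self {x} := ⟨fun h => norm_eq_zero.mp (by rw [norm_eq, h, norm_zero, Real.sqrt_zero]),
    fun h => by simpa [h] using inn_smul_left 0 0 0⟩
  inner_op_smul_right := inn_smul_left _ _ _
  inner_smul_right_complex {z x y} := by rw [← smul_one_smul A z y, inn_smul_left, smul_one_mul]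
  star_inner x y := (inn_star x y).symm
  norm_eq_sqrt_norm_inner_self := norm_eq

theorem derivation_on_EndA_continuous_general
    (inn : M → M → A)
    (inn_add_left : ∀ x y z : M, inn (x + y) z = inn x z + inn y z)
    (inn_smul_left : ∀ (a : A) (x y : M), inn (a • x) y = a * inn x y)
    (inn_star : ∀ x y : M, inn x y = star (inn y x))
    (inn_self_nonneg : ∀ x : M, 0 ≤ inn x x)
    (norm_eq : ∀ x : M, ‖x‖ = Real.sqrt ‖inn x x‖)
    (full : (Submodule.span ℂ {a : A | ∃ x y : M, inn x y = a}).topologicalClosure = ⊤)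
    (d : ↥(EndA A M) →ₗ[ℂ] ↥(EndA A M))
    (hd : ∀ S T : ↥(EndA A M), d (S * T) = d S * T + S * d T) :
    Continuous fun T : ↥(EndA A M) => d T := by
  let _ : CStarModule A M :=
    CStarModule.ofInnerLinearLeft inn inn_add_left inn_smul_left inn_star inn_self_nonneg norm_eq
  have hspan : {a : A | ∃ x y : M, ⟪x, y⟫_A = a} = {a | ∃ x y : M, inn x y = a} :=
    Set.ext fun _ => ⟨fun ⟨x, y, h⟩ => ⟨y, x, h⟩, fun ⟨x, y, h⟩ => ⟨y, x, h⟩⟩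
  exact EndA.continuous_derivation (hspan ▸ full) d hd

/-- **Lemma 7.** Every derivation on `End_A(M)` (for `A` commutative unital, `M` full) is
continuous. -/
theorem derivation_on_EndA_continuous
    (inn : M → M → A)
    (inn_add_left : ∀ x y z : M, inn (x + y) z = inn x z + inn y z)
    (inn_smul_left : ∀ (a : A) (x y : M), inn (a • x) y = a * inn x y)
    (inn_star : ∀ x y : M, inn x y = star (inn y x))
    (inn_self_nonneg : ∀ x : M, 0 ≤ inn x x)
    (inn_definite : ∀ x : M, inn x x = 0 → x = 0)
    (norm_eq : ∀ x : M, ‖x‖ = Real.sqrt ‖inn x x‖)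
    (full : (Submodule.span ℂ {a : A | ∃ x y : M, inn x y = a}).topologicalClosure = ⊤)
    (d : ↥(EndA A M) →ₗ[ℂ] ↥(EndA A M))
    (hd : ∀ S T : ↥(EndA A M), d (S * T) = d S * T + S * d T) :
    Continuous fun T : ↥(EndA A M) => d T :=
  derivation_on_EndA_continuous_general inn inn_add_left inn_smul_left inn_star inn_self_nonneg
    norm_eq full d hd
end

section
/- Let A be a commutative unital C*-algebra and let M be a full Hilbert A-module. If δ is a 2-local derivation on End_A(M) and δ is additive, then δ is homogeneous and satisfies δ(T²) = Tδ(T) + δ(T)T for every T ∈ End_A(M); hence δ is a Jordan derivation. -/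
set_option synthInstance.maxHeartbeats 1000000
set_option maxHeartbeats 1000000

variable {A : Type*} [CommCStarAlgebra A] [PartialOrder A] [StarOrderedRing A]
variable {M : Type*} [NormedAddCommGroup M] [CompleteSpace M] [NormedSpace ℂ M]
  [Module A M] [IsScalarTower ℂ A M] [IsBoundedSMul A M]

def IsTwoLocalDerivation (R : Type*) {B : Type*} [Semiring R] [NonUnitalNonAssocSemiring B]
    [Module R B] (δ : B → B) : Prop :=
  ∀ S T : B, ∃ d : B →ₗ[R] B, (∀ P Q : B, d (P * Q) = d P * Q + P * d Q) ∧ δ S = d S ∧ δ T = d T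

namespace IsTwoLocalDerivation

variable {R B : Type*} [Semiring R] [NonUnitalNonAssocSemiring B] [Module R B] {δ : B → B}

theorem map_smul (hδ : IsTwoLocalDerivation R δ) (c : R) (T : B) : δ (c • T) = c • δ T := by
  obtain ⟨d, -, hT, hcT⟩ := hδ T (c • T)
  rw [hcT, hT, d.map_smul]

theorem map_mul_self (hδ : IsTwoLocalDerivation R δ) (T : B) :
    δ (T * T) = T * δ T + δ T * T := by
  obtain ⟨d, hd, hT, hTT⟩ := hδ T (T * T)
  rw [hTT, hT, hd, add_comm]

end IsTwoLocalDerivation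

theorem additive_two_local_derivation_is_jordan_general
    (δ : ↥(EndA A M) → ↥(EndA A M))
    (hδ : ∀ S T : ↥(EndA A M), ∃ d : ↥(EndA A M) →ₗ[ℂ] ↥(EndA A M),
      (∀ P Q : ↥(EndA A M), d (P * Q) = d P * Q + P * d Q) ∧ δ S = d S ∧ δ T = d T) :
    (∀ (c : ℂ) (T : ↥(EndA A M)), δ (c • T) = c • δ T) ∧
    (∀ T : ↥(EndA A M), δ (T * T) = T * δ T + δ T * T) :=
  ⟨IsTwoLocalDerivation.map_smul hδ, IsTwoLocalDerivation.map_mul_self hδ⟩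

/-- An additive 2-local derivation on `End_A(M)` (for `A` commutative unital, `M` full) is
homogeneous and satisfies the Jordan identity, hence is a Jordan derivation. -/
theorem additive_two_local_derivation_is_jordan
    (inn : M → M → A)
    (inn_add_left : ∀ x y z : M, inn (x + y) z = inn x z + inn y z)
    (inn_smul_left : ∀ (a : A) (x y : M), inn (a • x) y = a * inn x y)
    (inn_star : ∀ x y : M, inn x y = star (inn y x))
    (inn_self_nonneg : ∀ x : M, 0 ≤ inn x x)
    (inn_definite : ∀ x : M, inn x x = 0 → x = 0)
    (norm_eq : ∀ x : M, ‖x‖ = Real.sqrt ‖inn x x‖)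
    (full : (Submodule.span ℂ {a : A | ∃ x y : M, inn x y = a}).topologicalClosure = ⊤)
    (δ : ↥(EndA A M) → ↥(EndA A M))
    (hδ : ∀ S T : ↥(EndA A M), ∃ d : ↥(EndA A M) →ₗ[ℂ] ↥(EndA A M),
      (∀ P Q : ↥(EndA A M), d (P * Q) = d P * Q + P * d Q) ∧ δ S = d S ∧ δ T = d T)
    (hadd : ∀ S T : ↥(EndA A M), δ (S + T) = δ S + δ T) :
    (∀ (c : ℂ) (T : ↥(EndA A M)), δ (c • T) = c • δ T) ∧
    (∀ T : ↥(EndA A M), δ (T * T) = T * δ T + δ T * T) :=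
  additive_two_local_derivation_is_jordan_general δ hδ
end
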